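/- Let G be a strongly connected directed graph of diameter D and let delays on edges be bounded by τ̄. In the delayed max-consensus protocol where each node updates every τ̄ steps by taking the max of its own value and values received from in-neighbors (sent at the previous update time), every node attains the global maximum of the initial values within T = D(1+τ̄) + τ̄ time steps. -/
import Mathlib


theorem delayed_max_consensus_epoch
    {N : ℕ} [NeZero N] (inN : Fin N → Finset (Fin N)) (D : ℕ)
    (hconn : ∀ i j : Fin N, ∃ m ≤ D, ∃ f : ℕ → Fin N,
      f 0 = j ∧ f m = i ∧ ∀ t < m, f t ∈ inN (f (t+1)))
    (τbar : ℕ) (hτ : 1 ≤ τbar)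
    (z : ℕ → Fin N → ℝ)
    (hupd : ∀ (ℓ : ℕ) (i : Fin N),
      z ((ℓ+1) * τbar) i = (insert i (inN i)).sup' (Finset.insert_nonempty i _)
        (fun j => z (ℓ * τbar) j))
    (hhold : ∀ (ℓ k : ℕ) (i : Fin N), 1 ≤ k → k < τbar →
      z (ℓ * τbar + k) i = z (ℓ * τbar) i) :
    ∀ i, z (D * (1 + τbar) + τbar) i = Finset.univ.sup' Finset.univ_nonempty (z 0) := by
  set M : ℝ := Finset.univ.sup' Finset.univ_nonempty (z 0) with hM
  -- upper bound
  have hub : ∀ ℓ i, z (ℓ * τbar) i ≤ M := by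
    intro ℓ
    induction ℓ with
    | zero => intro i; simp only [Nat.zero_mul]; exact Finset.le_sup' (z 0) (Finset.mem_univ i)
    | succ n ih =>
      intro i
      rw [hupd n i]
      exact Finset.sup'_le _ _ fun j _ => ih j
  -- monotonicity in epochs
  have hmono : ∀ ℓ i, z (ℓ * τbar) i ≤ z ((ℓ+1) * τbar) i := by
    intro ℓ i
    rw [hupd ℓ i]
    exact Finset.le_sup' (fun j => z (ℓ * τbar) j) (Finset.mem_insert_self i _)
  have hmono' : ∀ ℓ ℓ' i, ℓ ≤ ℓ' → z (ℓ * τbar) i ≤ z (ℓ' * τbar) i := by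
    intro ℓ ℓ' i h
    induction ℓ' with
    | zero => simp_all
    | succ n ih =>
      rcases Nat.lt_or_ge ℓ (n+1) with h' | h'
      · exact le_trans (ih (Nat.lt_succ_iff.mp h')) (hmono n i)
      · have : ℓ = n + 1 := le_antisymm h h'
        simp [this]
  -- path lower bound
  have hpath : ∀ (m : ℕ) (f : ℕ → Fin N), (∀ t < m, f t ∈ inN (f (t+1))) →
      z 0 (f 0) ≤ z (m * τbar) (f m) := by
    intro m
    induction m with
    | zero => intro f _; simp
    | succ n ih =>
      intro f hf
      have h1 : z 0 (f 0) ≤ z (n * τbar) (f n) :=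
        ih f (fun t ht => hf t (Nat.lt_succ_of_lt ht))
      refine h1.trans ?_
      rw [hupd n (f (n+1))]
      exact Finset.le_sup' (fun j => z (n * τbar) j)
        (Finset.mem_insert_of_mem (hf n (Nat.lt_succ_self n)))
  -- at epoch ℓ ≥ D, value equals M
  have hconv : ∀ ℓ i, D ≤ ℓ → z (ℓ * τbar) i = M := by
    intro ℓ i hℓ
    refine le_antisymm (hub ℓ i) ?_
    refine Finset.sup'_le _ _ fun j _ => ?_
    obtain ⟨m, hmD, f, hf0, hfm, hfe⟩ := hconn i j
    calc z 0 j = z 0 (f 0) := by rw [hf0]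
      _ ≤ z (m * τbar) (f m) := hpath m f hfe
      _ = z (m * τbar) i := by rw [hfm]
      _ ≤ z (ℓ * τbar) i := hmono' m ℓ i (hmD.trans hℓ)
  intro i
  set T := D * (1 + τbar) + τbar with hT
  have hτ0 : 0 < τbar := hτ
  have hq : D ≤ T / τbar := by
    rw [Nat.le_div_iff_mul_le hτ0]
    have : D * τbar ≤ D * (1 + τbar) := Nat.mul_le_mul_left D (by omega)
    omega
  have hTeq : T = T / τbar * τbar + T % τbar := by
    rw [Nat.mul_comm]; exact (Nat.div_add_mod T τbar).symm
  rcases Nat.eq_zero_or_pos (T % τbar) with hr | hr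
  · have : T = T / τbar * τbar := by omega
    rw [this]
    exact hconv _ i hq
  · have hrlt : T % τbar < τbar := Nat.mod_lt _ hτ0
    rw [hTeq, hhold (T / τbar) (T % τbar) i hr hrlt]
    exact hconv _ i hq
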